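/- arXiv:1311.6235 — 3 statements merged into one kernel-verified Lean document; each statement's English description precedes it below -/
import Mathlib

section
/- Let α₁ = v[i₁..j₁], α₂ = v[i₂..j₂], α₃ = v[i₃..j₃] be three pairwise distinct runs of a word v, all with the same shortest period p, and assume i₁ ≤ i₂ ≤ i₃. Then j₁ < i₃, i.e., α₁ and α₃ are disjoint. Consequently, any position of v lies within at most two runs with shortest period p. -/
/-- `x` occurs in `w` at 0-indexed position `i`
    (position `i+1` in the paper's 1-indexed convention). -/
def OccursAt {α : Type*} (x w : List α) (i : ℕ) : Prop := x <+: w.drop i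

/-- `p` is a period of `w`: `w[t] = w[t+p]` whenever both positions exist. -/
def HasPeriod {α : Type*} (w : List α) (p : ℕ) : Prop :=
  ∀ i, i + p < w.length → w[i]? = w[i + p]?

/-- `per(w)`: the smallest positive period of `w`. -/
noncomputable def minPeriod {α : Type*} (w : List α) : ℕ :=
  sInf {p | 0 < p ∧ HasPeriod w p}

/-- The fragment `v[a..b]` with 0-indexed inclusive endpoints `a ≤ b`. -/
def frag {α : Type*} (v : List α) (a b : ℕ) : List α := (v.drop a).take (b + 1 - a)

/-- `v[a..b]` (0-indexed) is a run of `v`: it is periodic and maximal. -/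
def IsRun {α : Type*} (v : List α) (a b : ℕ) : Prop :=
  a ≤ b ∧ b < v.length ∧
  2 * minPeriod (frag v a b) ≤ b + 1 - a ∧
  (a = 0 ∨ v[a - 1]? ≠ v[a + minPeriod (frag v a b) - 1]?) ∧
  (b = v.length - 1 ∨ v[b + 1 - minPeriod (frag v a b)]? ≠ v[b + 1]?)

lemma frag_length {α : Type*} (v : List α) (a b : ℕ) (hb : b < v.length) :
    (frag v a b).length = b + 1 - a := by
  simp [frag, List.length_take, List.length_drop]; omega

lemma frag_getElem? {α : Type*} (v : List α) (a b i : ℕ) (h : i < b + 1 - a) :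
    (frag v a b)[i]? = v[a + i]? := by
  rw [frag, List.getElem?_take, if_pos h, List.getElem?_drop]

lemma minPeriod_spec {α : Type*} (w : List α) (hw : w ≠ []) :
    0 < minPeriod w ∧ HasPeriod w (minPeriod w) := by
  have hm : w.length ∈ {p | 0 < p ∧ HasPeriod w p} :=
    ⟨List.length_pos_iff.mpr hw, fun i h => absurd h (by omega)⟩
  exact Nat.sInf_mem ⟨_, hm⟩

/-- Period of a fragment, expressed on `v` itself. -/
lemma period_frag {α : Type*} (v : List α) (a b p : ℕ) (hb : b < v.length)
    (hP : HasPeriod (frag v a b) p) :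
    ∀ t, a ≤ t → t + p ≤ b → v[t]? = v[t + p]? := by
  intro t ht htp
  have h1 : (t - a) + p < (frag v a b).length := by
    rw [frag_length v a b hb]; omega
  have := hP (t - a) h1
  rw [frag_getElem?, frag_getElem?] at this
  · have e1 : a + (t - a) = t := by omega
    have e2 : a + (t - a + p) = t + p := by omega
    rwa [e1, e2] at this
  · rw [frag_length v a b hb] at h1; omega
  · rw [frag_length v a b hb] at h1; omega

/-- Two runs with the same minimal period `p` that overlap on at least `p`
positions coincide. -/
lemma runs_overlap_eq {α : Type*} (v : List α) (p a b a' b' : ℕ)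
    (h1 : IsRun v a b) (h2 : IsRun v a' b')
    (hp1 : minPeriod (frag v a b) = p) (hp2 : minPeriod (frag v a' b') = p)
    (haa : a ≤ a') (hov : a' + p ≤ b + 1) : a = a' ∧ b = b' := by
  obtain ⟨hab, hb, hlen1, hL1, hR1⟩ := h1
  obtain ⟨hab', hb', hlen2, hL2, hR2⟩ := h2
  rw [hp1] at hlen1 hL1 hR1
  rw [hp2] at hlen2 hL2 hR2
  have hne1 : frag v a b ≠ [] := by
    intro h; have := frag_length v a b hb; rw [h] at this; simp at this; omega
  have hne2 : frag v a' b' ≠ [] := by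
    intro h; have := frag_length v a' b' hb'; rw [h] at this; simp at this; omega
  have hp0 : 0 < p := hp1 ▸ (minPeriod_spec _ hne1).1
  have P1 : ∀ t, a ≤ t → t + p ≤ b → v[t]? = v[t + p]? :=
    period_frag v a b p hb (hp1 ▸ (minPeriod_spec _ hne1).2)
  have P2 : ∀ t, a' ≤ t → t + p ≤ b' → v[t]? = v[t + p]? :=
    period_frag v a' b' p hb' (hp2 ▸ (minPeriod_spec _ hne2).2)
  -- union period
  have PU : ∀ t, a ≤ t → t + p ≤ max b b' → v[t]? = v[t + p]? := by
    intro t ht htp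
    rcases le_or_gt (t + p) b with h | h
    · exact P1 t ht h
    · have ha't : a' ≤ t := by omega
      have : t + p ≤ b' := by omega
      exact P2 t ha't this
  -- a = a'
  have haeq : a = a' := by
    by_contra hne
    have haa' : a < a' := lt_of_le_of_ne haa hne
    have hL2' : v[a' - 1]? ≠ v[a' + p - 1]? := by
      rcases hL2 with h | h
      · omega
      · exact h
    apply hL2'
    have := PU (a' - 1) (by omega) (by omega)
    have e1 : a' - 1 + p = a' + p - 1 := by omega
    rwa [e1] at this
  -- b ≤ b'? first show ¬ (b < b')
  have hb_le : b' ≤ b := by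
    by_contra hlt
    push_neg at hlt
    have hbne : b ≠ v.length - 1 := by omega
    have hR1' : v[b + 1 - p]? ≠ v[b + 1]? := by
      rcases hR1 with h | h
      · exact absurd h hbne
      · exact h
    apply hR1'
    have := PU (b + 1 - p) (by omega) (by omega)
    have e1 : b + 1 - p + p = b + 1 := by omega
    rwa [e1] at this
  have hb_ge : b ≤ b' := by
    by_contra hlt
    push_neg at hlt
    have hbne : b' ≠ v.length - 1 := by omega
    have hR2' : v[b' + 1 - p]? ≠ v[b' + 1]? := by
      rcases hR2 with h | h
      · exact absurd h hbne
      · exact h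
    apply hR2'
    have := PU (b' + 1 - p) (by omega) (by omega)
    have e1 : b' + 1 - p + p = b' + 1 := by omega
    rwa [e1] at this
  exact ⟨haeq, le_antisymm hb_ge hb_le⟩

/-- Two distinct runs with the same minimal period overlap on fewer than `p`
positions. -/
lemma runs_sep {α : Type*} (v : List α) (p a b a' b' : ℕ)
    (h1 : IsRun v a b) (h2 : IsRun v a' b')
    (hp1 : minPeriod (frag v a b) = p) (hp2 : minPeriod (frag v a' b') = p)
    (haa : a ≤ a') (hne : (a, b) ≠ (a', b')) : b + 2 ≤ a' + p := by
  by_contra h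
  push_neg at h
  have := runs_overlap_eq v p a b a' b' h1 h2 hp1 hp2 haa (by omega)
  exact hne (by simp [this.1, this.2])

/-- Key: third run starts after the first one ends. -/
lemma runs_key {α : Type*} (v : List α) (p : ℕ) (a₁ b₁ a₂ b₂ a₃ b₃ : ℕ)
    (h₁ : IsRun v a₁ b₁) (h₂ : IsRun v a₂ b₂) (h₃ : IsRun v a₃ b₃)
    (hp₁ : minPeriod (frag v a₁ b₁) = p) (hp₂ : minPeriod (frag v a₂ b₂) = p)
    (hp₃ : minPeriod (frag v a₃ b₃) = p)
    (hd₁₂ : (a₁, b₁) ≠ (a₂, b₂)) (hd₂₃ : (a₂, b₂) ≠ (a₃, b₃))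
    (h12 : a₁ ≤ a₂) (h23 : a₂ ≤ a₃) : b₁ < a₃ := by
  have s12 := runs_sep v p a₁ b₁ a₂ b₂ h₁ h₂ hp₁ hp₂ h12 hd₁₂
  have s23 := runs_sep v p a₂ b₂ a₃ b₃ h₂ h₃ hp₂ hp₃ h23 hd₂₃
  have hlen2 : 2 * p ≤ b₂ + 1 - a₂ := hp₂ ▸ h₂.2.2.1
  have hab2 : a₂ ≤ b₂ := h₂.1
  omega

/-- three pairwise distinct runs of `v` with the same shortest
period `p` and ordered left endpoints satisfy `j₁ < i₃` (the first and third
runs are disjoint); consequently, any position of `v` lies within at most two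
runs with shortest period `p`. -/
theorem three_runs_same_period {α : Type*} (v : List α) (p : ℕ)
    (a₁ b₁ a₂ b₂ a₃ b₃ : ℕ)
    (h₁ : IsRun v a₁ b₁) (h₂ : IsRun v a₂ b₂) (h₃ : IsRun v a₃ b₃)
    (hp₁ : minPeriod (frag v a₁ b₁) = p) (hp₂ : minPeriod (frag v a₂ b₂) = p)
    (hp₃ : minPeriod (frag v a₃ b₃) = p)
    (hd₁₂ : (a₁, b₁) ≠ (a₂, b₂)) (hd₁₃ : (a₁, b₁) ≠ (a₃, b₃))
    (hd₂₃ : (a₂, b₂) ≠ (a₃, b₃))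
    (hord : a₁ ≤ a₂ ∧ a₂ ≤ a₃) :
    b₁ < a₃ ∧
    ∀ t : ℕ, ∀ r₁ r₂ r₃ : ℕ × ℕ,
      (IsRun v r₁.1 r₁.2 ∧ minPeriod (frag v r₁.1 r₁.2) = p ∧ r₁.1 ≤ t ∧ t ≤ r₁.2) →
      (IsRun v r₂.1 r₂.2 ∧ minPeriod (frag v r₂.1 r₂.2) = p ∧ r₂.1 ≤ t ∧ t ≤ r₂.2) →
      (IsRun v r₃.1 r₃.2 ∧ minPeriod (frag v r₃.1 r₃.2) = p ∧ r₃.1 ≤ t ∧ t ≤ r₃.2) →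
      r₁ ≠ r₂ → r₁ ≠ r₃ → r₂ ≠ r₃ → False := by
  constructor
  · exact runs_key v p a₁ b₁ a₂ b₂ a₃ b₃ h₁ h₂ h₃ hp₁ hp₂ hp₃ hd₁₂ hd₂₃ hord.1 hord.2
  · rintro t ⟨x₁, y₁⟩ ⟨x₂, y₂⟩ ⟨x₃, y₃⟩ ⟨R₁, P₁, l₁, u₁⟩ ⟨R₂, P₂, l₂, u₂⟩ ⟨R₃, P₃, l₃, u₃⟩ n₁₂ n₁₃ n₂₃
    simp only at R₁ P₁ l₁ u₁ R₂ P₂ l₂ u₂ R₃ P₃ l₃ u₃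
    rcases le_total x₁ x₂ with o₁₂ | o₂₁ <;> rcases le_total x₂ x₃ with o₂₃ | o₃₂ <;>
      rcases le_total x₁ x₃ with o₁₃ | o₃₁
    · have k := runs_key v p x₁ y₁ x₂ y₂ x₃ y₃ R₁ R₂ R₃ P₁ P₂ P₃ n₁₂ n₂₃ o₁₂ o₂₃; omega
    · have k := runs_key v p x₁ y₁ x₂ y₂ x₃ y₃ R₁ R₂ R₃ P₁ P₂ P₃ n₁₂ n₂₃ o₁₂ o₂₃; omega
    · have k := runs_key v p x₁ y₁ x₃ y₃ x₂ y₂ R₁ R₃ R₂ P₁ P₃ P₂ n₁₃ n₂₃.symm o₁₃ o₃₂; omega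
    · have k := runs_key v p x₃ y₃ x₁ y₁ x₂ y₂ R₃ R₁ R₂ P₃ P₁ P₂ n₁₃.symm n₁₂ o₃₁ o₁₂; omega
    · have k := runs_key v p x₂ y₂ x₁ y₁ x₃ y₃ R₂ R₁ R₃ P₂ P₁ P₃ n₁₂.symm n₁₃ o₂₁ o₁₃; omega
    · have k := runs_key v p x₂ y₂ x₃ y₃ x₁ y₁ R₂ R₃ R₁ P₂ P₃ P₁ n₂₃ n₁₃.symm o₂₃ o₃₁; omega
    · have k := runs_key v p x₃ y₃ x₂ y₂ x₁ y₁ R₃ R₂ R₁ P₃ P₂ P₁ n₂₃.symm n₁₂.symm o₃₂ o₂₁; omega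
    · have k := runs_key v p x₃ y₃ x₂ y₂ x₁ y₁ R₃ R₂ R₁ P₃ P₂ P₁ n₂₃.symm n₁₂.symm o₃₂ o₂₁; omega
end

section
/- Let Δ ≥ 1 and n, m be positive integers, let a = (a₁, …, a_n) be a (Δ/2)-diverse sequence over [1, m], and let ℓ be an integer with 0 ≤ ℓ ≤ m. Let π be a permutation of [1, m] drawn uniformly at random and let A = {i ∈ [1, n] : π(a_i) ≤ ℓ}. Then for every integer interval P ⊆ [1, n] of size ⌈Δ/2⌉, the probability that P ∩ A = ∅ is at most exp(−ℓ·|P|/m). -/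
/-- `FillGaps(A, Δ, I)`: `A` together with all maximal subintervals
`[i, i+Δ] ⊆ I ∖ A` of `Δ+1` consecutive integers disjoint from `A`. -/
def FillGaps (A : Set ℕ) (Δ : ℕ) (I : Set ℕ) : Set ℕ :=
  A ∪ {x | ∃ i, x ∈ Set.Icc i (i + Δ) ∧ Set.Icc i (i + Δ) ⊆ I \ A}

/-- The local minimum function: `localMin b Δ i` is the smallest index
`j ∈ [i, i+Δ]` at which `b` attains its minimum on `[i, i+Δ]`. -/
noncomputable def localMin {β : Type*} [LinearOrder β] (b : ℕ → β) (Δ i : ℕ) : ℕ :=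
  sInf {j | j ∈ Set.Icc i (i + Δ) ∧ ∀ t ∈ Set.Icc i (i + Δ), b j ≤ b t}

/-- A sequence `a` with positions `1..n` and values in `Fin m` (representing the
alphabet `[1,m]` via `σ ↦ σ + 1`) is `(Δ/2)`-diverse: positions carrying equal
values are at distance greater than `Δ/2`. -/
def HalfDiverse (n Δ : ℕ) {m : ℕ} (a : ℕ → Fin m) : Prop :=
  ∀ i ∈ Set.Icc 1 n, ∀ j ∈ Set.Icc 1 n, a i = a j → i < j → Δ < 2 * (j - i)


/-!
Diversity makes `a` injective on the interval `P`, so `P ∩ A = ∅` says that `π` maps the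
`k = ⌈Δ/2⌉` distinct letters `a(P)` into the `m - ℓ` letters above `ℓ`. Conditioning on the
image of one more letter, a transposition shows that every admissible value is at most as
likely as any other value, so each letter costs a factor `(m - ℓ)/m`; finally
`(1 - ℓ/m)^k ≤ exp(-ℓk/m)`.
-/

open Equiv Finset

section PermCount

variable {α : Type*} [Fintype α] [DecidableEq α]

theorem card_filter_forall_mem_and_apply_eq_le {S T : Finset α} {s₀ : α} (hs₀ : s₀ ∉ S)
    {v : α} (hv : v ∈ T) (w : α) :
    #{π : Perm α | (∀ x ∈ S, π x ∈ T) ∧ π s₀ = v} ≤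
      #{π : Perm α | (∀ x ∈ S, π x ∈ T) ∧ π s₀ = w} := by
  -- `π` sends no point of `S` to `v = π s₀`, so composing with `swap v w` keeps `S` inside `T`.
  refine card_le_card_of_injOn (swap v w * ·) ?_ (mul_right_injective _).injOn
  intro π hπ
  simp only [coe_filter, mem_univ, true_and, Set.mem_ofPred_eq] at hπ ⊢
  obtain ⟨hST, rfl⟩ := hπ
  refine ⟨fun x hx => ?_, by simp⟩
  have hne : π x ≠ π s₀ := π.injective.ne (by rintro rfl; exact hs₀ hx)
  rcases eq_or_ne (π x) w with h | h
  · simpa [h] using hv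
  · simpa [swap_apply_of_ne_of_ne hne h] using hST x hx

theorem card_filter_forall_mem_insert_mul_le (S T : Finset α) {s₀ : α} (hs₀ : s₀ ∉ S) :
    #{π : Perm α | ∀ x ∈ insert s₀ S, π x ∈ T} * Fintype.card α ≤
      #T * #{π : Perm α | ∀ x ∈ S, π x ∈ T} := by
  set F : α → ℕ := fun v => #{π : Perm α | (∀ x ∈ S, π x ∈ T) ∧ π s₀ = v}
  have hinsert : #{π : Perm α | ∀ x ∈ insert s₀ S, π x ∈ T} = ∑ v ∈ T, F v := by
    rw [card_eq_sum_card_fiberwise (f := fun π : Perm α => π s₀) (t := T)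
      fun π hπ => by
        simp only [coe_filter, mem_univ, true_and, Set.mem_ofPred_eq] at hπ
        exact hπ s₀ (mem_insert_self s₀ S)]
    refine sum_congr rfl fun v hv => congrArg card ?_
    ext π
    simp only [mem_filter, mem_univ, true_and, forall_mem_insert]
    constructor
    · exact fun h => ⟨h.1.2, h.2⟩
    · rintro ⟨h, rfl⟩
      exact ⟨⟨hv, h⟩, rfl⟩
  have hfibers : #{π : Perm α | ∀ x ∈ S, π x ∈ T} = ∑ w, F w := by
    rw [card_eq_sum_card_fiberwise (f := fun π : Perm α => π s₀) (t := univ) (by simp)]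
    simp only [filter_filter, F]
  calc #{π : Perm α | ∀ x ∈ insert s₀ S, π x ∈ T} * Fintype.card α
      = ∑ v ∈ T, ∑ _w : α, F v := by
        rw [hinsert, sum_mul]
        simp only [mul_comm, sum_const, card_univ, smul_eq_mul]
    _ ≤ ∑ _v ∈ T, ∑ w, F w :=
        sum_le_sum fun v hv => sum_le_sum fun w _ =>
          card_filter_forall_mem_and_apply_eq_le hs₀ hv w
    _ = #T * #{π : Perm α | ∀ x ∈ S, π x ∈ T} := by rw [sum_const, smul_eq_mul, hfibers]

theorem card_filter_forall_mem_mul_pow_le (S T : Finset α) :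
    #{π : Perm α | ∀ x ∈ S, π x ∈ T} * Fintype.card α ^ #S ≤
      #T ^ #S * (Fintype.card α).factorial := by
  induction S using Finset.induction_on with
  | empty => simp [Fintype.card_perm]
  | @insert s₀ S hs₀ ih =>
    calc #{π : Perm α | ∀ x ∈ insert s₀ S, π x ∈ T} * Fintype.card α ^ #(insert s₀ S)
        = #{π : Perm α | ∀ x ∈ insert s₀ S, π x ∈ T} * Fintype.card α * Fintype.card α ^ #S := by
          rw [card_insert_of_notMem hs₀, pow_succ]; ring
      _ ≤ #T * (#{π : Perm α | ∀ x ∈ S, π x ∈ T} * Fintype.card α ^ #S) := by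
          rw [← mul_assoc]
          exact Nat.mul_le_mul_right _ (card_filter_forall_mem_insert_mul_le S T hs₀)
      _ ≤ #T * (#T ^ #S * (Fintype.card α).factorial) := by gcongr
      _ = #T ^ #(insert s₀ S) * (Fintype.card α).factorial := by
          rw [card_insert_of_notMem hs₀, pow_succ]; ring

theorem card_filter_forall_mem_div_card_perm_le [Nonempty α] (S T : Finset α) :
    (#{π : Perm α | ∀ x ∈ S, π x ∈ T} : ℝ) / Fintype.card (Perm α) ≤
      ((#T : ℝ) / Fintype.card α) ^ #S := by
  rw [Fintype.card_perm, div_pow, div_le_div_iff₀ (by positivity) (by positivity)]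
  exact_mod_cast card_filter_forall_mem_mul_pow_le S T

end PermCount

theorem one_sub_pow_le_exp_neg_mul {x : ℝ} (hx : x ≤ 1) (k : ℕ) :
    (1 - x) ^ k ≤ Real.exp (-(x * k)) := by
  calc (1 - x) ^ k ≤ Real.exp (-x) ^ k :=
        pow_le_pow_left₀ (by linarith) (Real.one_sub_le_exp_neg x) k
    _ = Real.exp (-(x * k)) := by rw [← Real.exp_nat_mul]; ring_nf

theorem HalfDiverse.injOn_Icc {n Δ m c : ℕ} {a : ℕ → Fin m} (hdiv : HalfDiverse n Δ a)
    (hP : Set.Icc c (c + (Δ + 1) / 2 - 1) ⊆ Set.Icc 1 n) :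
    Set.InjOn a (Set.Icc c (c + (Δ + 1) / 2 - 1)) := by
  have hlt : ∀ i ∈ Set.Icc c (c + (Δ + 1) / 2 - 1), ∀ j ∈ Set.Icc c (c + (Δ + 1) / 2 - 1),
      a i = a j → ¬ i < j := fun i hi j hj hij hlt => by
    have := hdiv i (hP hi) j (hP hj) hij hlt
    simp only [Set.mem_Icc] at hi hj
    omega
  exact fun i hi j hj hij =>
    le_antisymm (not_lt.1 (hlt j hj i hi hij.symm)) (not_lt.1 (hlt i hi j hj hij))

theorem prob_interval_misses_A_general (n m Δ ℓ : ℕ) (hm : 0 < m)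
    (hΔ : 1 ≤ Δ) (hℓ : ℓ ≤ m)
    (a : ℕ → Fin m) (hdiv : HalfDiverse n Δ a)
    (c : ℕ) (hP : Set.Icc c (c + (Δ + 1) / 2 - 1) ⊆ Set.Icc 1 n) :
    ({π : Equiv.Perm (Fin m) |
        Set.Icc c (c + (Δ + 1) / 2 - 1) ∩
          {i | i ∈ Set.Icc 1 n ∧ (π (a i) : ℕ) + 1 ≤ ℓ} = ∅}.ncard : ℝ)
      / (Fintype.card (Equiv.Perm (Fin m)) : ℝ)
    ≤ Real.exp (-((ℓ : ℝ) * (((Δ + 1) / 2 : ℕ) : ℝ)) / (m : ℝ)) := by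
  set k := (Δ + 1) / 2
  set P := Finset.Icc c (c + k - 1)
  set T : Finset (Fin m) := ({v | (v : ℕ) < ℓ} : Finset (Fin m))ᶜ
  have hT : #T = m - ℓ := by
    rw [card_compl, Fintype.card_fin, Fin.card_filter_val_lt, min_eq_right hℓ]
  have hS : #(P.image a) = k := by
    rw [card_image_of_injOn (by simpa [P] using hdiv.injOn_Icc hP), Nat.card_Icc]
    omega
  have hevent : {π : Perm (Fin m) |
      Set.Icc c (c + k - 1) ∩ {i | i ∈ Set.Icc 1 n ∧ (π (a i) : ℕ) + 1 ≤ ℓ} = ∅} =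
        ↑({π : Perm (Fin m) | ∀ s ∈ P.image a, π s ∈ T} : Finset _) := by
    ext π
    simp only [Set.mem_Icc, Order.add_one_le_iff, Set.eq_empty_iff_forall_notMem,
      Set.mem_inter_iff, Set.mem_ofPred_eq, not_and, not_lt, and_imp, mem_image, mem_Icc,
      compl_filter, mem_filter, mem_univ, true_and, forall_exists_index, coe_filter, P, T]
    exact ⟨fun h s i hci hic his => his ▸ h i hci hic (hP ⟨hci, hic⟩).1 (hP ⟨hci, hic⟩).2,
      fun h i hci hic _ _ => h _ i hci hic rfl⟩
  have : Nonempty (Fin m) := ⟨⟨0, hm⟩⟩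
  have hm' : (0 : ℝ) < m := by exact_mod_cast hm
  rw [hevent, Set.ncard_coe_finset]
  calc _ ≤ ((#T : ℝ) / Fintype.card (Fin m)) ^ k := by
        simpa [hS] using card_filter_forall_mem_div_card_perm_le (P.image a) T
    _ = (1 - ℓ / m) ^ k := by
        rw [hT, Fintype.card_fin, Nat.cast_sub hℓ, sub_div, div_self hm'.ne']
    _ ≤ Real.exp (-(ℓ / m * k)) :=
        one_sub_pow_le_exp_neg_mul (div_le_one_of_le₀ (by exact_mod_cast hℓ) hm'.le) k
    _ = _ := by ring_nf

/-- for a `(Δ/2)`-diverse sequence `a` over `[1,m]`, `0 ≤ ℓ ≤ m`,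
a uniformly random permutation `π` of `[1,m]`, `A = {i ∈ [1,n] : π(aᵢ) ≤ ℓ}`,
and any interval `P ⊆ [1,n]` of size `⌈Δ/2⌉`, the probability that `P ∩ A = ∅`
is at most `exp(−ℓ·|P|/m)`. -/
theorem prob_interval_misses_A (n m Δ ℓ : ℕ) (hn : 0 < n) (hm : 0 < m)
    (hΔ : 1 ≤ Δ) (hℓ : ℓ ≤ m)
    (a : ℕ → Fin m) (hdiv : HalfDiverse n Δ a)
    (c : ℕ) (hP : Set.Icc c (c + (Δ + 1) / 2 - 1) ⊆ Set.Icc 1 n) :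
    ({π : Equiv.Perm (Fin m) |
        Set.Icc c (c + (Δ + 1) / 2 - 1) ∩
          {i | i ∈ Set.Icc 1 n ∧ (π (a i) : ℕ) + 1 ≤ ℓ} = ∅}.ncard : ℝ)
      / (Fintype.card (Equiv.Perm (Fin m)) : ℝ)
    ≤ Real.exp (-((ℓ : ℝ) * (((Δ + 1) / 2 : ℕ) : ℝ)) / (m : ℝ)) :=
  prob_interval_misses_A_general n m Δ ℓ hm hΔ hℓ a hdiv c hP
end

section
/- Let Δ ≥ 1 be an integer and let a = (a₁, …, a_n) be a (Δ/2)-diverse sequence over [1, m]. Let π be a permutation of [1, m] drawn uniformly at random. Then for every i ∈ [1, n−Δ] and every j ∈ [i, i+Δ], the probability that f_π(i) = j is at most 1/⌈(Δ+1)/2⌉; consequently, for every i ∈ [1, n−Δ−1], the probability that f_π(i) ≠ f_π(i+1) is at most 2/⌈(Δ+1)/2⌉. -/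
/-- `localMin b Δ i` is a member of the defining set. -/
lemma localMin_spec {β : Type*} [LinearOrder β] (b : ℕ → β) (Δ i : ℕ) :
    localMin b Δ i ∈ Set.Icc i (i + Δ) ∧
      ∀ t ∈ Set.Icc i (i + Δ), b (localMin b Δ i) ≤ b t := by
  have hne : {j | j ∈ Set.Icc i (i + Δ) ∧ ∀ t ∈ Set.Icc i (i + Δ), b j ≤ b t}.Nonempty := by
    obtain ⟨j, hj, hmin⟩ := (Finset.Icc i (i + Δ)).exists_min_image b
      ⟨i, Finset.mem_Icc.mpr (by omega)⟩
    rw [Finset.mem_Icc] at hj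
    exact ⟨j, Set.mem_Icc.mpr hj, fun t ht => hmin t (by
      rw [Set.mem_Icc] at ht; exact Finset.mem_Icc.mpr ht)⟩
  exact Nat.sInf_mem hne

lemma localMin_le {β : Type*} [LinearOrder β] (b : ℕ → β) (Δ i k : ℕ)
    (hk : k ∈ Set.Icc i (i + Δ)) (hmin : ∀ t ∈ Set.Icc i (i + Δ), b k ≤ b t) :
    localMin b Δ i ≤ k :=
  Nat.sInf_le ⟨hk, hmin⟩

/-- If the local minimum position changes from window `i` to window `i+1`, then
either `f(i) = i` or `f(i+1) = i+1+Δ`. (Contrapositive form.) -/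
lemma localMin_succ {β : Type*} [LinearOrder β] (b : ℕ → β) (Δ i : ℕ)
    (h1 : localMin b Δ i ≠ i) (h2 : localMin b Δ (i + 1) ≠ i + 1 + Δ) :
    localMin b Δ i = localMin b Δ (i + 1) := by
  obtain ⟨hj_mem, hj_min⟩ := localMin_spec b Δ i
  obtain ⟨hk_mem, hk_min⟩ := localMin_spec b Δ (i + 1)
  rw [Set.mem_Icc] at hj_mem hk_mem
  have hj1 : i + 1 ≤ localMin b Δ i := by omega
  have hk1 : localMin b Δ (i + 1) ≤ i + Δ := by omega
  have hjk : b (localMin b Δ i) ≤ b (localMin b Δ (i + 1)) :=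
    hj_min _ (Set.mem_Icc.mpr (by omega))
  have hkj : b (localMin b Δ (i + 1)) ≤ b (localMin b Δ i) :=
    hk_min _ (Set.mem_Icc.mpr (by omega))
  have heq : b (localMin b Δ i) = b (localMin b Δ (i + 1)) := le_antisymm hjk hkj
  have hle1 : localMin b Δ i ≤ localMin b Δ (i + 1) := by
    apply localMin_le
    · exact Set.mem_Icc.mpr (by omega)
    · intro t ht
      rw [Set.mem_Icc] at ht
      rcases Nat.lt_or_ge t (i + 1) with h | h
      · have ht' : t = i := by omega
        rw [ht']
        exact le_of_eq_of_le heq.symm (hj_min i (Set.mem_Icc.mpr (by omega)))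
      · exact hk_min t (Set.mem_Icc.mpr (by omega))
  have hle2 : localMin b Δ (i + 1) ≤ localMin b Δ i := by
    apply localMin_le
    · exact Set.mem_Icc.mpr (by omega)
    · intro t ht
      rw [Set.mem_Icc] at ht
      rcases Nat.lt_or_ge t (i + Δ + 1) with h | h
      · exact hj_min t (Set.mem_Icc.mpr (by omega))
      · have : t = i + 1 + Δ := by omega
        subst this
        exact le_of_eq_of_le heq (hk_min _ (Set.mem_Icc.mpr (by omega)))
  omega

/-- Key counting: the permutations for which a fixed `v₀ ∈ V` attains the minimum
of `π` over `V` form exactly a `1/|V|` fraction of all permutations. -/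
lemma key_count {m : ℕ} (V : Finset (Fin m)) (v₀ : Fin m) (hv : v₀ ∈ V) :
    V.card * (Finset.univ.filter
      (fun π : Equiv.Perm (Fin m) => ∀ v ∈ V, π v₀ ≤ π v)).card
      = Fintype.card (Equiv.Perm (Fin m)) := by
  classical
  set S : Fin m → Finset (Equiv.Perm (Fin m)) :=
    fun w => Finset.univ.filter (fun π => ∀ v ∈ V, π w ≤ π v) with hS
  have hswapV : ∀ w ∈ V, ∀ v ∈ V, Equiv.swap w v₀ v ∈ V := by
    intro w hw v hvV
    rcases eq_or_ne v w with rfl | h1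
    · rw [Equiv.swap_apply_left]; exact hv
    rcases eq_or_ne v v₀ with rfl | h2
    · rw [Equiv.swap_apply_right]; exact hw
    · rwa [Equiv.swap_apply_of_ne_of_ne h1 h2]
  have hcard : ∀ w ∈ V, (S w).card = (S v₀).card := by
    intro w hw
    apply Finset.card_bij' (fun π _ => π * Equiv.swap w v₀) (fun π _ => π * Equiv.swap w v₀)
    · intro π hπ
      simp only [hS, Finset.mem_filter, Finset.mem_univ, true_and] at hπ ⊢
      intro v hvV
      have e1 : (π * Equiv.swap w v₀) v₀ = π w := by
        simp [Equiv.Perm.mul_apply, Equiv.swap_apply_right]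
      have e2 : (π * Equiv.swap w v₀) v = π (Equiv.swap w v₀ v) := rfl
      rw [e1, e2]
      exact hπ _ (hswapV w hw v hvV)
    · intro π hπ
      simp only [hS, Finset.mem_filter, Finset.mem_univ, true_and] at hπ ⊢
      intro v hvV
      have e1 : (π * Equiv.swap w v₀) w = π v₀ := by
        simp [Equiv.Perm.mul_apply, Equiv.swap_apply_left]
      have e2 : (π * Equiv.swap w v₀) v = π (Equiv.swap w v₀ v) := rfl
      rw [e1, e2]
      exact hπ _ (hswapV w hw v hvV)
    · intro π _
      simp [mul_assoc]
    · intro π _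
      simp [mul_assoc]
  have hcover : (Finset.univ : Finset (Equiv.Perm (Fin m))) = V.biUnion S := by
    ext π
    simp only [Finset.mem_univ, true_iff, Finset.mem_biUnion, hS, Finset.mem_filter]
    obtain ⟨w, hw, hmin⟩ := V.exists_min_image (fun v => π v) ⟨v₀, hv⟩
    exact ⟨w, hw, trivial, hmin⟩
  have hdisj : ∀ w ∈ V, ∀ w' ∈ V, w ≠ w' → Disjoint (S w) (S w') := by
    intro w hw w' hw' hne
    rw [Finset.disjoint_left]
    intro π hπ hπ'
    simp only [hS, Finset.mem_filter, Finset.mem_univ, true_and] at hπ hπ'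
    exact hne (π.injective (le_antisymm (hπ w' hw') (hπ' w hw)))
  calc V.card * (S v₀).card
      = ∑ w ∈ V, (S v₀).card := by rw [Finset.sum_const, smul_eq_mul]
    _ = ∑ w ∈ V, (S w).card := Finset.sum_congr rfl (fun w hw => (hcard w hw).symm)
    _ = (V.biUnion S).card := (Finset.card_biUnion hdisj).symm
    _ = (Finset.univ : Finset (Equiv.Perm (Fin m))).card := by rw [← hcover]
    _ = Fintype.card (Equiv.Perm (Fin m)) := rfl

/-- Part 1, as a standalone lemma. -/
lemma part1_aux (n m Δ : ℕ) (a : ℕ → Fin m) (hdiv : HalfDiverse n Δ a)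
    (i : ℕ) (hi : i ∈ Set.Icc 1 (n - Δ)) (j : ℕ) (hj : j ∈ Set.Icc i (i + Δ)) :
    ({π : Equiv.Perm (Fin m) | localMin (fun t => π (a t)) Δ i = j}.ncard : ℝ)
      / (Fintype.card (Equiv.Perm (Fin m)) : ℝ)
    ≤ 1 / (((Δ + 2) / 2 : ℕ) : ℝ) := by
  classical
  rw [Set.mem_Icc] at hi hj
  set V : Finset (Fin m) := (Finset.Icc i (i + Δ)).image a with hV
  -- each value occurs at most twice in the window
  have hmemn : ∀ p ∈ Finset.Icc i (i + Δ), p ∈ Set.Icc 1 n := by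
    intro p hp
    rw [Finset.mem_Icc] at hp
    exact Set.mem_Icc.mpr (by omega)
  have hfiber : ∀ v ∈ V, ((Finset.Icc i (i + Δ)).filter (fun p => a p = v)).card ≤ 2 := by
    intro v _
    by_contra hcon
    push_neg at hcon
    obtain ⟨s, hs_sub, hs_card⟩ := Finset.exists_subset_card_eq (show 3 ≤ _ from hcon)
    obtain ⟨p, q, r, hpq, hpr, hqr, hs⟩ := Finset.card_eq_three.mp hs_card
    have hp := hs_sub (show p ∈ s by rw [hs]; simp)
    have hq := hs_sub (show q ∈ s by rw [hs]; simp)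
    have hr := hs_sub (show r ∈ s by rw [hs]; simp)
    rw [Finset.mem_filter] at hp hq hr
    have key : ∀ x y : ℕ, x ∈ Finset.Icc i (i + Δ) → y ∈ Finset.Icc i (i + Δ) →
        a x = a y → x < y → Δ < 2 * (y - x) := by
      intro x y hx hy hxy hlt
      exact hdiv x (hmemn x hx) y (hmemn y hy) hxy hlt
    have h1 : p < q → Δ < 2 * (q - p) := key p q hp.1 hq.1 (hp.2.trans hq.2.symm)
    have h1' : q < p → Δ < 2 * (p - q) := key q p hq.1 hp.1 (hq.2.trans hp.2.symm)
    have h2 : p < r → Δ < 2 * (r - p) := key p r hp.1 hr.1 (hp.2.trans hr.2.symm)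
    have h2' : r < p → Δ < 2 * (p - r) := key r p hr.1 hp.1 (hr.2.trans hp.2.symm)
    have h3 : q < r → Δ < 2 * (r - q) := key q r hq.1 hr.1 (hq.2.trans hr.2.symm)
    have h3' : r < q → Δ < 2 * (q - r) := key r q hr.1 hq.1 (hr.2.trans hq.2.symm)
    rw [Finset.mem_Icc] at *
    omega
  have hVcard : (Δ + 2) / 2 ≤ V.card := by
    have h1 : (Finset.Icc i (i + Δ)).card ≤ 2 * V.card :=
      Finset.card_le_mul_card_image (f := a) (Finset.Icc i (i + Δ)) 2 hfiber
    have h2 : (Finset.Icc i (i + Δ)).card = Δ + 1 := by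
      rw [Nat.card_Icc]; omega
    omega
  have hv₀ : a j ∈ V := Finset.mem_image_of_mem a (Finset.mem_Icc.mpr hj)
  set Sfin : Finset (Equiv.Perm (Fin m)) :=
    Finset.univ.filter (fun π : Equiv.Perm (Fin m) => ∀ v ∈ V, π (a j) ≤ π v) with hSfin
  have hcount : V.card * Sfin.card = Fintype.card (Equiv.Perm (Fin m)) :=
    key_count V (a j) hv₀
  -- the event is contained in Sfin
  have hsub : {π : Equiv.Perm (Fin m) | localMin (fun t => π (a t)) Δ i = j} ⊆ ↑Sfin := by
    intro π hπ
    simp only [Set.mem_setOf_eq] at hπ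
    obtain ⟨_, hmin⟩ := localMin_spec (fun t => π (a t)) Δ i
    rw [hπ] at hmin
    simp only [Finset.coe_filter, Set.mem_setOf_eq, Finset.mem_univ, true_and, hSfin]
    intro v hvV
    obtain ⟨t, ht, rfl⟩ := Finset.mem_image.mp hvV
    rw [Finset.mem_Icc] at ht
    exact hmin t (Set.mem_Icc.mpr ht)
  have hE : {π : Equiv.Perm (Fin m) | localMin (fun t => π (a t)) Δ i = j}.ncard ≤
      Sfin.card := by
    have := Set.ncard_le_ncard hsub (Set.toFinite _)
    rwa [Set.ncard_coe_finset] at this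
  have hK : 1 ≤ (Δ + 2) / 2 := by omega
  have hKE : ((Δ + 2) / 2) *
      {π : Equiv.Perm (Fin m) | localMin (fun t => π (a t)) Δ i = j}.ncard ≤
      Fintype.card (Equiv.Perm (Fin m)) := by
    calc ((Δ + 2) / 2) * _ ≤ V.card * Sfin.card := Nat.mul_le_mul hVcard hE
      _ = _ := hcount
  have hN : (0 : ℝ) < (Fintype.card (Equiv.Perm (Fin m)) : ℝ) := by
    exact_mod_cast Fintype.card_pos
  have hK' : (0 : ℝ) < (((Δ + 2) / 2 : ℕ) : ℝ) := by exact_mod_cast hK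
  rw [div_le_div_iff₀ hN hK']
  calc ({π : Equiv.Perm (Fin m) | localMin (fun t => π (a t)) Δ i = j}.ncard : ℝ)
        * (((Δ + 2) / 2 : ℕ) : ℝ)
      = ((((Δ + 2) / 2) *
          {π : Equiv.Perm (Fin m) | localMin (fun t => π (a t)) Δ i = j}.ncard : ℕ) : ℝ) := by
        push_cast; ring
    _ ≤ ((Fintype.card (Equiv.Perm (Fin m)) : ℕ) : ℝ) := by exact_mod_cast hKE
    _ = 1 * (Fintype.card (Equiv.Perm (Fin m)) : ℝ) := by ring

/-- for a `(Δ/2)`-diverse sequence `a` over `[1,m]` and a uniformly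
random permutation `π` of `[1,m]`: for all `i ∈ [1, n−Δ]` and `j ∈ [i, i+Δ]`,
`P[f_π(i) = j] ≤ 1/⌈(Δ+1)/2⌉`; consequently for all `i ∈ [1, n−Δ−1]`,
`P[f_π(i) ≠ f_π(i+1)] ≤ 2/⌈(Δ+1)/2⌉`. (Here `⌈(Δ+1)/2⌉ = (Δ+2)/2` in `ℕ`.) -/
theorem prob_localMin_diverse (n m Δ : ℕ) (hΔ : 1 ≤ Δ)
    (a : ℕ → Fin m) (hdiv : HalfDiverse n Δ a) :
    (∀ i ∈ Set.Icc 1 (n - Δ), ∀ j ∈ Set.Icc i (i + Δ),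
      ({π : Equiv.Perm (Fin m) | localMin (fun t => π (a t)) Δ i = j}.ncard : ℝ)
        / (Fintype.card (Equiv.Perm (Fin m)) : ℝ)
      ≤ 1 / (((Δ + 2) / 2 : ℕ) : ℝ)) ∧
    (∀ i ∈ Set.Icc 1 (n - Δ - 1),
      ({π : Equiv.Perm (Fin m) |
          localMin (fun t => π (a t)) Δ i ≠ localMin (fun t => π (a t)) Δ (i + 1)}.ncard : ℝ)
        / (Fintype.card (Equiv.Perm (Fin m)) : ℝ)
      ≤ 2 / (((Δ + 2) / 2 : ℕ) : ℝ)) := by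
  constructor
  · intro i hi j hj
    exact part1_aux n m Δ a hdiv i hi j hj
  · intro i hi
    rw [Set.mem_Icc] at hi
    have hi1 : i ∈ Set.Icc 1 (n - Δ) := Set.mem_Icc.mpr (by omega)
    have hi2 : i + 1 ∈ Set.Icc 1 (n - Δ) := Set.mem_Icc.mpr (by omega)
    have hA := part1_aux n m Δ a hdiv i hi1 i (Set.mem_Icc.mpr (by omega))
    have hB := part1_aux n m Δ a hdiv (i + 1) hi2 (i + 1 + Δ) (Set.mem_Icc.mpr (by omega))
    set A : Set (Equiv.Perm (Fin m)) :=
      {π | localMin (fun t => π (a t)) Δ i = i} with hAdef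
    set B : Set (Equiv.Perm (Fin m)) :=
      {π | localMin (fun t => π (a t)) Δ (i + 1) = i + 1 + Δ} with hBdef
    have hsub : {π : Equiv.Perm (Fin m) |
        localMin (fun t => π (a t)) Δ i ≠ localMin (fun t => π (a t)) Δ (i + 1)} ⊆ A ∪ B := by
      intro π hπ
      simp only [Set.mem_setOf_eq] at hπ
      rw [Set.mem_union]
      by_contra h
      push_neg at h
      exact hπ (localMin_succ (fun t => π (a t)) Δ i h.1 h.2)
    have hncard : ({π : Equiv.Perm (Fin m) |
        localMin (fun t => π (a t)) Δ i ≠ localMin (fun t => π (a t)) Δ (i + 1)}.ncard : ℝ)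
        ≤ (A.ncard : ℝ) + (B.ncard : ℝ) := by
      have h1 := Set.ncard_le_ncard hsub (Set.toFinite _)
      have h2 := Set.ncard_union_le A B
      exact_mod_cast h1.trans h2
    have hN : (0 : ℝ) < (Fintype.card (Equiv.Perm (Fin m)) : ℝ) := by
      exact_mod_cast (Fintype.card_pos : 0 < Fintype.card (Equiv.Perm (Fin m)))
    calc ({π : Equiv.Perm (Fin m) |
            localMin (fun t => π (a t)) Δ i ≠ localMin (fun t => π (a t)) Δ (i + 1)}.ncard : ℝ)
          / (Fintype.card (Equiv.Perm (Fin m)) : ℝ)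
        ≤ ((A.ncard : ℝ) + (B.ncard : ℝ)) / (Fintype.card (Equiv.Perm (Fin m)) : ℝ) := by
          exact div_le_div_of_nonneg_right hncard hN.le
      _ = (A.ncard : ℝ) / (Fintype.card (Equiv.Perm (Fin m)) : ℝ)
          + (B.ncard : ℝ) / (Fintype.card (Equiv.Perm (Fin m)) : ℝ) := add_div _ _ _
      _ ≤ 1 / (((Δ + 2) / 2 : ℕ) : ℝ) + 1 / (((Δ + 2) / 2 : ℕ) : ℝ) := add_le_add hA hB
      _ = 2 / (((Δ + 2) / 2 : ℕ) : ℝ) := by ring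
end
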